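/- Let C : Set L → Set L be an operation. The following are equivalent: (1) there exists an antitonic and right-absorbing operator S : Set L → Set L such that C(X) = Cn(X ∪ S(X)) for every X ⊆ L; (2) for every X ⊆ L, C(X) = Cn(X ∪ ⋂_{Y : Y ⊆ Cn(X)} C(Y)); (3) C is supraclassical, left-absorbing, right-absorbing, deductive and compact. -/

import Mathlib

open Set

namespace DedNonmon

variable {L : Type*}

/-- `Cn X ⊆ C X` for all `X`. -/
def Supra (Cn C : Set L → Set L) : Prop := ∀ X : Set L, Cn X ⊆ C X

/-- `Cn (C X) = C X` for all `X`. -/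
def LeftAb (Cn C : Set L → Set L) : Prop := ∀ X : Set L, Cn (C X) = C X

/-- `Cn X = Cn Y` implies `C X = C Y`. -/
def RightAb (Cn C : Set L → Set L) : Prop := ∀ X Y : Set L, Cn X = Cn Y → C X = C Y

/-- `Y ⊆ X` implies `C X ⊆ Cn (X ∪ C Y)`. -/
def Deduc (Cn C : Set L → Set L) : Prop := ∀ X Y : Set L, Y ⊆ X → C X ⊆ Cn (X ∪ C Y)

/-- `X ⊆ Y` implies `C Y ⊆ C X`. -/
def Antitonic (C : Set L → Set L) : Prop := ∀ X Y : Set L, X ⊆ Y → C Y ⊆ C X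

/-- `Y ⊆ Cn (C X)` implies `Cn (C (X ∪ Y)) = Cn (C X)`. -/
def Cumul (Cn C : Set L → Set L) : Prop :=
  ∀ X Y : Set L, Y ⊆ Cn (C X) → Cn (C (X ∪ Y)) = Cn (C X)

/-- Compactness for (possibly nonmonotonic) operations. -/
def CompactOp (C : Set L → Set L) : Prop :=
  ∀ (X : Set L) (x : L), x ∈ C X →
    ∃ A : Set L, A.Finite ∧ A ⊆ X ∧ ∀ Y : Set L, A ⊆ Y → Y ⊆ X → x ∈ C Y

/-- Supracompactness (Freund). -/
def SupracompactOp (C : Set L → Set L) : Prop :=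
  ∀ (X : Set L) (x : L), x ∈ C X →
    ∃ A : Set L, A.Finite ∧ A ⊆ X ∧ ∀ Y : Set L, A ⊆ Y → Y ⊆ C X → x ∈ C Y

/-- Strong co-compactness. -/
def StrongCoCompact (C : Set L → Set L) : Prop :=
  ∀ (X : Set L) (x : L), x ∉ C X → ∃ A : Set L, A.Finite ∧ A ⊆ X ∧ x ∉ C A

/-- Co-compactness. -/
def CoCompact (Cn C : Set L → Set L) : Prop :=
  ∀ (X : Set L) (x : L), x ∉ C X → ∃ A : Set L, A.Finite ∧ A ⊆ Cn X ∧ x ∉ C A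

/-- Finitary supraclassicality. -/
def FinSupra (Cn F : Set L → Set L) : Prop := ∀ A : Set L, A.Finite → Cn A ⊆ F A

/-- Finitary left absorption. -/
def FinLeftAb (Cn F : Set L → Set L) : Prop := ∀ A : Set L, A.Finite → Cn (F A) = F A

/-- Finitary right absorption. -/
def FinRightAb (Cn F : Set L → Set L) : Prop :=
  ∀ A B : Set L, A.Finite → B.Finite → Cn A = Cn B → F A = F B

/-- Finitary deductivity. -/
def FinDeduc (Cn F : Set L → Set L) : Prop :=
  ∀ A B : Set L, A.Finite → B.Finite → B ⊆ A → F A ⊆ Cn (A ∪ F B)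

/-- Finitary cumulativity. -/
def FinCumul (Cn F : Set L → Set L) : Prop :=
  ∀ A B : Set L, A.Finite → B.Finite → B ⊆ Cn (F A) → Cn (F (A ∪ B)) = Cn (F A)

/-!
The implications (1) ⇒ (3) are direct checks on `C X = Cn (X ∪ S X)`, and (2) ⇒ (1) takes
`S X = ⋂_{Y ⊆ Cn X} C Y`. For (3) ⇒ (2), let `x ∈ C X = C (Cn X)`. Compactness at `Cn X` gives
finitely many premises `A ⊆ Cn X` with `x ∈ C (Y ∪ A)` for every `Y ⊆ Cn X`; deductivity turns this
into `x ∈ Cn (C Y ∪ A)`, so by the deduction theorem the conditional `t` of `x` on `A` lies in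
`Cn (C Y) = C Y` for all such `Y`, and `x` follows from `X` together with `t`.
-/

def infBelow (Cn C : Set L → Set L) (X : Set L) : Set L :=
  ⋂ (Y : Set L) (_ : Y ⊆ Cn X), C Y

section

variable {Cn C S : Set L → Set L}

theorem mem_infBelow {X : Set L} {x : L} :
    x ∈ infBelow Cn C X ↔ ∀ Y : Set L, Y ⊆ Cn X → x ∈ C Y := by
  simp only [infBelow, mem_iInter]

theorem infBelow_subset_infBelow {X Y : Set L} (h : Cn X ⊆ Cn Y) :
    infBelow Cn C Y ⊆ infBelow Cn C X := fun _ hx =>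
  mem_infBelow.2 fun Z hZ => mem_infBelow.1 hx Z (hZ.trans h)

theorem infBelow_subset (hIncl : ∀ X : Set L, X ⊆ Cn X) (X : Set L) :
    infBelow Cn C X ⊆ C X := fun _ hx =>
  mem_infBelow.1 hx X (hIncl X)

theorem antitonic_infBelow (hMono : ∀ X Y : Set L, X ⊆ Y → Cn X ⊆ Cn Y) :
    Antitonic (infBelow Cn C) := fun X Y hXY =>
  infBelow_subset_infBelow (hMono X Y hXY)

theorem rightAb_infBelow : RightAb Cn (infBelow Cn C) := fun _ _ h =>
  (infBelow_subset_infBelow h.ge).antisymm (infBelow_subset_infBelow h.le)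

theorem cn_subset_of_subset_cn (hMono : ∀ X Y : Set L, X ⊆ Y → Cn X ⊆ Cn Y)
    (hIdem : ∀ X : Set L, Cn (Cn X) = Cn X) {X Y : Set L} (h : X ⊆ Cn Y) : Cn X ⊆ Cn Y :=
  hIdem Y ▸ hMono X (Cn Y) h

theorem cn_union_congr_left (hIncl : ∀ X : Set L, X ⊆ Cn X)
    (hMono : ∀ X Y : Set L, X ⊆ Y → Cn X ⊆ Cn Y) (hIdem : ∀ X : Set L, Cn (Cn X) = Cn X)
    {X Y : Set L} (h : Cn X = Cn Y) (Z : Set L) : Cn (X ∪ Z) = Cn (Y ∪ Z) := by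
  have key : ∀ {X Y : Set L}, Cn X ⊆ Cn Y → Cn (X ∪ Z) ⊆ Cn (Y ∪ Z) := fun h =>
    cn_subset_of_subset_cn hMono hIdem <| union_subset
      ((hIncl _).trans (h.trans (hMono _ _ subset_union_left)))
      (subset_union_right.trans (hIncl _))
  exact (key h.le).antisymm (key h.ge)

theorem exists_mem_cn_iff_mem_cn_union {imp : L → L → L}
    (himp : ∀ (a b : L) (X : Set L), b ∈ Cn (X ∪ {a}) ↔ imp a b ∈ Cn X)
    {A : Set L} (hA : A.Finite) (x : L) : ∃ t : L, ∀ W : Set L, x ∈ Cn (W ∪ A) ↔ t ∈ Cn W := by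
  induction A, hA using Set.Finite.induction_on with
  | empty => exact ⟨x, fun W => by rw [union_empty]⟩
  | @insert a A _ _ ih =>
    obtain ⟨t, ht⟩ := ih
    refine ⟨imp a t, fun W => ?_⟩
    rw [union_insert, ← union_singleton, union_right_comm, ht, himp]

theorem supra_of_eq_cn_union (hMono : ∀ X Y : Set L, X ⊆ Y → Cn X ⊆ Cn Y)
    (hC : ∀ X : Set L, C X = Cn (X ∪ S X)) : Supra Cn C := fun X =>
  hC X ▸ hMono _ _ subset_union_left

theorem leftAb_of_eq_cn_union (hIdem : ∀ X : Set L, Cn (Cn X) = Cn X)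
    (hC : ∀ X : Set L, C X = Cn (X ∪ S X)) : LeftAb Cn C := fun X => by
  rw [hC X, hIdem]

theorem rightAb_of_eq_cn_union (hIncl : ∀ X : Set L, X ⊆ Cn X)
    (hMono : ∀ X Y : Set L, X ⊆ Y → Cn X ⊆ Cn Y) (hIdem : ∀ X : Set L, Cn (Cn X) = Cn X)
    (hS : RightAb Cn S) (hC : ∀ X : Set L, C X = Cn (X ∪ S X)) : RightAb Cn C := fun X Y h => by
  rw [hC X, hC Y, hS X Y h, cn_union_congr_left hIncl hMono hIdem h]

theorem deduc_of_eq_cn_union (hIncl : ∀ X : Set L, X ⊆ Cn X)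
    (hMono : ∀ X Y : Set L, X ⊆ Y → Cn X ⊆ Cn Y) (hS : Antitonic S)
    (hC : ∀ X : Set L, C X = Cn (X ∪ S X)) : Deduc Cn C := fun X Y hYX => by
  have hSC : S X ⊆ C Y := (hS Y X hYX).trans (hC Y ▸ subset_union_right.trans (hIncl _))
  exact hC X ▸ hMono _ _ (union_subset_union_right X hSC)

theorem compactOp_of_eq_cn_union (hMono : ∀ X Y : Set L, X ⊆ Y → Cn X ⊆ Cn Y)
    (hCnCpt : ∀ (X : Set L) (x : L), x ∈ Cn X → ∃ A : Set L, A.Finite ∧ A ⊆ X ∧ x ∈ Cn A)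
    (hS : Antitonic S) (hC : ∀ X : Set L, C X = Cn (X ∪ S X)) : CompactOp C := by
  intro X x hx
  rw [hC X] at hx
  obtain ⟨B, hBfin, hBX, hxB⟩ := hCnCpt _ x hx
  refine ⟨B ∩ X, hBfin.inter_of_left X, inter_subset_right, fun Y hBY hYX => ?_⟩
  have hBY' : B ⊆ Y ∪ S Y := fun b hb =>
    (hBX hb).imp (fun hbX => hBY ⟨hb, hbX⟩) (fun hbS => hS Y X hYX hbS)
  exact hC Y ▸ hMono _ _ hBY' hxB

theorem cn_union_infBelow_subset (hIncl : ∀ X : Set L, X ⊆ Cn X)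
    (hMono : ∀ X Y : Set L, X ⊆ Y → Cn X ⊆ Cn Y) (hSup : Supra Cn C) (hLA : LeftAb Cn C)
    (X : Set L) : Cn (X ∪ infBelow Cn C X) ⊆ C X :=
  hLA X ▸ hMono _ _ (union_subset ((hIncl X).trans (hSup X)) (infBelow_subset hIncl X))

theorem apply_union_subset_cn_apply_union (hIncl : ∀ X : Set L, X ⊆ Cn X)
    (hMono : ∀ X Y : Set L, X ⊆ Y → Cn X ⊆ Cn Y) (hSup : Supra Cn C) (hDed : Deduc Cn C)
    (Y A : Set L) : C (Y ∪ A) ⊆ Cn (C Y ∪ A) := by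
  refine (hDed (Y ∪ A) Y subset_union_left).trans (hMono _ _ ?_)
  rw [union_right_comm]
  exact union_subset_union_left A (union_subset ((hIncl Y).trans (hSup Y)) subset_rfl)

theorem subset_cn_union_infBelow {imp : L → L → L} (hIncl : ∀ X : Set L, X ⊆ Cn X)
    (hMono : ∀ X Y : Set L, X ⊆ Y → Cn X ⊆ Cn Y) (hIdem : ∀ X : Set L, Cn (Cn X) = Cn X)
    (himp : ∀ (a b : L) (X : Set L), b ∈ Cn (X ∪ {a}) ↔ imp a b ∈ Cn X)
    (hSup : Supra Cn C) (hLA : LeftAb Cn C) (hRA : RightAb Cn C) (hDed : Deduc Cn C)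
    (hCpt : CompactOp C) (X : Set L) : C X ⊆ Cn (X ∪ infBelow Cn C X) := by
  intro x hx
  rw [← hRA _ _ (hIdem X)] at hx
  obtain ⟨A, hAfin, hACn, hAx⟩ := hCpt (Cn X) x hx
  obtain ⟨t, ht⟩ := exists_mem_cn_iff_mem_cn_union himp hAfin x
  have htD : t ∈ infBelow Cn C X := mem_infBelow.2 fun Y hY => by
    have hxY : x ∈ C (Y ∪ A) := hAx _ subset_union_right (union_subset hY hACn)
    rw [← hLA Y, ← ht]
    exact apply_union_subset_cn_apply_union hIncl hMono hSup hDed Y A hxY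
  have hx' : x ∈ Cn ((X ∪ infBelow Cn C X) ∪ A) := (ht _).2 (hIncl _ (Or.inr htD))
  refine cn_subset_of_subset_cn hMono hIdem (union_subset (hIncl _) ?_) hx'
  exact hACn.trans (hMono _ _ subset_union_left)

end

theorem stmt4 (Cn C : Set L → Set L)
    (hIncl : ∀ X : Set L, X ⊆ Cn X)
    (hMono : ∀ X Y : Set L, X ⊆ Y → Cn X ⊆ Cn Y)
    (hIdem : ∀ X : Set L, Cn (Cn X) = Cn X)
    (hCnCpt : ∀ (X : Set L) (x : L), x ∈ Cn X → ∃ A : Set L, A.Finite ∧ A ⊆ X ∧ x ∈ Cn A)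
    (hImp : ∃ imp : L → L → L, ∀ (a b : L) (X : Set L), b ∈ Cn (X ∪ {a}) ↔ imp a b ∈ Cn X)
 :
    ((∃ S : Set L → Set L, Antitonic S ∧ RightAb Cn S ∧ ∀ X : Set L, C X = Cn (X ∪ S X)) ↔
        ∀ X : Set L, C X = Cn (X ∪ ⋂ (Y : Set L) (_ : Y ⊆ Cn X), C Y)) ∧
    ((∀ X : Set L, C X = Cn (X ∪ ⋂ (Y : Set L) (_ : Y ⊆ Cn X), C Y)) ↔
        (Supra Cn C ∧ LeftAb Cn C ∧ RightAb Cn C ∧ Deduc Cn C ∧ CompactOp C)) := by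
  obtain ⟨imp, himp⟩ := hImp
  have hTFAE : [∃ S : Set L → Set L, Antitonic S ∧ RightAb Cn S ∧ ∀ X, C X = Cn (X ∪ S X),
      ∀ X : Set L, C X = Cn (X ∪ infBelow Cn C X),
      Supra Cn C ∧ LeftAb Cn C ∧ RightAb Cn C ∧ Deduc Cn C ∧ CompactOp C].TFAE := by
    tfae_have 1 → 3
    | ⟨S, hSanti, hSRA, hC⟩ =>
      ⟨supra_of_eq_cn_union hMono hC, leftAb_of_eq_cn_union hIdem hC,
        rightAb_of_eq_cn_union hIncl hMono hIdem hSRA hC,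
        deduc_of_eq_cn_union hIncl hMono hSanti hC, compactOp_of_eq_cn_union hMono hCnCpt hSanti hC⟩
    tfae_have 3 → 2
    | ⟨hSup, hLA, hRA, hDed, hCpt⟩ => fun X =>
      (subset_cn_union_infBelow hIncl hMono hIdem himp hSup hLA hRA hDed hCpt X).antisymm
        (cn_union_infBelow_subset hIncl hMono hSup hLA X)
    tfae_have 2 → 1 := fun hC => ⟨infBelow Cn C, antitonic_infBelow hMono, rightAb_infBelow, hC⟩
    tfae_finish
  exact ⟨hTFAE.out 0 1, hTFAE.out 1 2⟩

end DedNonmon
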